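/- Let (X_n), (Y_n), (Z_n) be sequences of real random variables with X_n ≥ Y_n in stochastic order for each n, X_n having continuous distributions, Z_n defined on the same space as X_n, and Z_n → 0 in probability. Then there exist random variables Y'_n with Y'_n distributed as Y_n and random variables R_n → 0 in probability (on a common space with Y'_n) such that X_n + Z_n ≥ Y'_n + R_n in stochastic order for every n. -/

import Mathlib

/-! Choose `ε n → 0` with `δ n := P(|Z n| ≥ ε n) → 0`, so that
`P(X n + Z n ≤ x) ≤ P(Y n ≤ x + ε n) + δ n`. On `(0, 1)` with Lebesgue measure take for `Y' n` the
quantile function of `Y n`, and let `Y' n + R n` be `Y' n - ε n` on `(0, 1 - δ n)` and the quantile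
function of `X n + Z n`, shifted to start at `1 - δ n`, on the remaining interval of length `δ n`.
With `F`, `G` the distribution functions of `Y n`, `X n + Z n`, the first piece carries mass
`min (F (x + ε n)) (1 - δ n)` below `x` and the second `min (G x) (δ n)`, which together dominate
`G x`; and `R n = -ε n` off a set of measure `δ n`. -/

open MeasureTheory Filter Set ProbabilityTheory Topology

lemma measurable_sInf_setOf_le_apply (g : ℝ → ℝ) : Measurable fun u => sInf {y | u ≤ g y} := by
  set S : ℝ → Set ℝ := fun u => {y | u ≤ g y}
  have hS : Antitone S := fun u v huv y hy => huv.trans hy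
  set P : Set ℝ := {u | BddBelow (S u) ∧ (S u).Nonempty}
  have hP : P.OrdConnected :=
    ⟨fun u hu v hv w hw => ⟨hu.1.mono (hS hw.1), hv.2.mono (hS hw.2)⟩⟩
  refine measurable_of_restrict_of_restrict_compl hP.measurableSet ?_ ?_
  · exact Monotone.measurable fun u v huv => csInf_le_csInf u.2.1 v.2.2 (hS huv)
  · convert measurable_const (a := (0 : ℝ)) with ⟨u, hu⟩
    rcases not_and_or.mp hu with hbdd | hne
    · exact Real.sInf_of_not_bddBelow hbdd
    · have hempty : {y | u ≤ g y} = ∅ := not_nonempty_iff_eq_empty.mp hne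
      simp only [domRestrict_apply, hempty, Real.sInf_empty]

-- Only meaningful on `(0, 1)`: elsewhere the set is empty or unbounded below and `sInf` is `0`.
noncomputable def quantile (ρ : Measure ℝ) (u : ℝ) : ℝ := sInf {y | u ≤ cdf ρ y}

lemma measurable_quantile (ρ : Measure ℝ) : Measurable (quantile ρ) :=
  measurable_sInf_setOf_le_apply _

section quantile

variable (ρ : Measure ℝ)

lemma quantile_le_iff {u : ℝ} (hu₀ : 0 < u) (hu₁ : u < 1) (y : ℝ) :
    quantile ρ u ≤ y ↔ u ≤ cdf ρ y := by
  obtain ⟨b, hb⟩ := eventually_atBot.mp ((tendsto_cdf_atBot ρ).eventually_lt_const hu₀)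
  have hbdd : BddBelow {y | u ≤ cdf ρ y} :=
    ⟨b, fun y hy => le_of_not_gt fun hyb => (hb y hyb.le).not_ge hy⟩
  refine ⟨fun hy => ?_, fun hy => csInf_le hbdd hy⟩
  have hne : {y | u ≤ cdf ρ y}.Nonempty :=
    ((tendsto_cdf_atTop ρ).eventually_const_le hu₁).exists
  have hright : Tendsto (cdf ρ) (𝓝[>] y) (𝓝 (cdf ρ y)) :=
    ((cdf ρ).right_continuous y).mono Ioi_subset_Ici_self
  refine ge_of_tendsto hright (eventually_nhdsWithin_of_forall fun z hz => ?_)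
  obtain ⟨s, hs, hsz⟩ := exists_lt_of_csInf_lt hne (hy.trans_lt hz)
  exact hs.trans (monotone_cdf ρ hsz.le)

lemma volume_Ioo_inter_quantile_sub_le {a c : ℝ} (hc : c ≤ 1) (y : ℝ) :
    volume (Ioo a (a + c) ∩ {u | quantile ρ (u - a) ≤ y}) = ENNReal.ofReal (min (cdf ρ y) c) := by
  have hset : ∀ u ∈ Ioo a (a + c), quantile ρ (u - a) ≤ y ↔ u ≤ a + cdf ρ y := fun u hu => by
    rw [quantile_le_iff ρ (by linarith [hu.1]) (by linarith [hu.2])]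
    constructor <;> intro h <;> linarith
  refine le_antisymm ?_ ?_
  · calc volume (Ioo a (a + c) ∩ {u | quantile ρ (u - a) ≤ y})
        ≤ volume (Ioc a (a + min (cdf ρ y) c)) := measure_mono fun u ⟨hu, hq⟩ =>
          ⟨hu.1, add_min a _ _ ▸ le_min ((hset u hu).mp hq) hu.2.le⟩
      _ = _ := by rw [Real.volume_Ioc, add_sub_cancel_left]
  · calc ENNReal.ofReal (min (cdf ρ y) c) = volume (Ioo a (a + min (cdf ρ y) c)) := by
          rw [Real.volume_Ioo, add_sub_cancel_left]
      _ ≤ _ := measure_mono fun u ⟨hau, hu⟩ => by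
          rw [add_min, lt_min_iff] at hu
          exact ⟨⟨hau, hu.2⟩, (hset u ⟨hau, hu.2⟩).mpr hu.1.le⟩

end quantile

instance isProbabilityMeasure_volume_restrict_Ioo_zero_one :
    IsProbabilityMeasure (volume.restrict (Ioo (0 : ℝ) 1)) := ⟨by simp⟩

lemma map_quantile_volume_restrict_Ioo (ρ : Measure ℝ) [IsProbabilityMeasure ρ] :
    (volume.restrict (Ioo 0 1)).map (quantile ρ) = ρ := by
  refine Measure.ext_of_Iic _ _ fun y => ?_
  have hvol := volume_Ioo_inter_quantile_sub_le ρ (a := 0) le_rfl y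
  rw [zero_add, min_eq_left (cdf_le_one ρ y), ofReal_cdf] at hvol
  rw [Measure.map_apply (measurable_quantile ρ) measurableSet_Iic,
    Measure.restrict_apply (measurable_quantile ρ measurableSet_Iic), inter_comm, ← hvol]
  simp only [sub_zero]
  rfl

theorem MeasureTheory.TendstoInMeasure.exists_tendsto_measure_le_dist {α E : Type*}
    [MeasurableSpace α] {μ : Measure α} [PseudoMetricSpace E] {f : ℕ → α → E} {g : α → E}
    (hf : TendstoInMeasure μ f atTop g) :
    ∃ ε : ℕ → ℝ, (∀ n, 0 < ε n) ∧ Tendsto ε atTop (𝓝 0) ∧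
      Tendsto (fun n => μ {x | ε n ≤ dist (f n x) (g x)}) atTop (𝓝 0) := by
  rw [tendstoInMeasure_iff_dist] at hf
  -- `sInf (S n)` is the Ky Fan distance between `f n` and `g`.
  set S : ℕ → Set ℝ := fun n => {η | 0 < η ∧ μ {x | η ≤ dist (f n x) (g x)} ≤ ENNReal.ofReal η}
  have hS₀ : ∀ n, 0 ≤ sInf (S n) := fun n => Real.sInf_nonneg fun η hη => hη.1.le
  have hmem : ∀ η > 0, ∀ᶠ n in atTop, η ∈ S n := fun η hη =>
    ((hf η hη).eventually_lt_const (ENNReal.ofReal_pos.mpr hη)).mono fun n hn => ⟨hη, hn.le⟩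
  have hinf : Tendsto (fun n => sInf (S n)) atTop (𝓝 0) := by
    refine tendsto_order.2 ⟨fun a ha => .of_forall fun n => ha.trans_le (hS₀ n), fun a ha => ?_⟩
    filter_upwards [hmem (a / 2) (by positivity)] with n hn
    exact (csInf_le ⟨0, fun η hη => hη.1.le⟩ hn).trans_lt (by linarith)
  set ε : ℕ → ℝ := fun n => sInf (S n) + 1 / ((n : ℝ) + 1)
  have hε_pos : ∀ n, 0 < ε n := fun n => add_pos_of_nonneg_of_pos (hS₀ n) (by positivity)
  have hε : Tendsto ε atTop (𝓝 0) := by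
    simpa only [add_zero] using hinf.add tendsto_one_div_add_atTop_nhds_zero_nat
  refine ⟨ε, hε_pos, hε, tendsto_of_tendsto_of_tendsto_of_le_of_le' tendsto_const_nhds
    (by simpa using ENNReal.tendsto_ofReal hε) (.of_forall fun n => zero_le) ?_⟩
  filter_upwards [hmem 1 one_pos] with n hn
  obtain ⟨η, hη, hηε⟩ := exists_lt_of_csInf_lt (⟨1, hn⟩ : (S n).Nonempty)
    (lt_add_of_pos_right (sInf (S n)) (by positivity : (0 : ℝ) < 1 / ((n : ℝ) + 1)))
  calc μ {x | ε n ≤ dist (f n x) (g x)} ≤ μ {x | η ≤ dist (f n x) (g x)} :=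
        measure_mono fun x hx => hηε.le.trans hx
    _ ≤ ENNReal.ofReal η := hη.2
    _ ≤ ENNReal.ofReal (ε n) := ENNReal.ofReal_le_ofReal hηε.le

-- Only meaningful on `(0, 1)`: elsewhere the set is empty or unbounded below and `sInf` is `0`.
noncomputable def quantileSplice (ρ ν : Measure ℝ) (ε δ u : ℝ) : ℝ :=
  if u < 1 - δ then quantile ρ u - ε else quantile ν (u - (1 - δ))

section quantileSplice

variable (ρ ν : Measure ℝ) {ε δ : ℝ}

lemma measurable_quantileSplice : Measurable (quantileSplice ρ ν ε δ) :=
  Measurable.ite measurableSet_Iio ((measurable_quantile ρ).sub_const ε)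
    ((measurable_quantile ν).comp (measurable_id.sub_const _))

lemma measure_le_dist_quantileSplice_sub_quantile_le {a : ℝ} (ha : |ε| < a) :
    volume.restrict (Ioo 0 1) {u | a ≤ dist (quantileSplice ρ ν ε δ u - quantile ρ u) 0}
      ≤ ENNReal.ofReal δ := by
  rw [Measure.restrict_apply' measurableSet_Ioo]
  calc _ ≤ volume (Ico (1 - δ) 1) := measure_mono fun u hu => by
          refine ⟨le_of_not_gt fun hlt => ?_, hu.2.2⟩
          replace hu := hu.1
          simp only [mem_ofPred_eq, quantileSplice, if_pos hlt, sub_sub_cancel_left,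
            dist_zero_right, Real.norm_eq_abs, abs_neg] at hu
          linarith
    _ = ENNReal.ofReal δ := by rw [Real.volume_Ico, sub_sub_cancel]

lemma measure_Iic_le_measure_quantileSplice_le [IsProbabilityMeasure ν] (hδ₀ : 0 ≤ δ)
    (hδ₁ : δ ≤ 1) (hνρ : ∀ x, cdf ν x ≤ cdf ρ (x + ε) + δ) (x : ℝ) :
    ν (Iic x) ≤ volume.restrict (Ioo 0 1) {u | quantileSplice ρ ν ε δ u ≤ x} := by
  -- `0 + ·`, `· - 0` and `1 - δ + δ` put both pieces in the shape of
  -- `volume_Ioo_inter_quantile_sub_le`.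
  set J₁ := Ioo 0 (0 + (1 - δ)) ∩ {u | quantile ρ (u - 0) ≤ x + ε}
  set J₂ := Ioo (1 - δ) (1 - δ + δ) ∩ {u | quantile ν (u - (1 - δ)) ≤ x}
  have hJ₂ : MeasurableSet J₂ := measurableSet_Ioo.inter <| measurableSet_le
    ((measurable_quantile ν).comp (measurable_id.sub_const _)) measurable_const
  have hdisj : Disjoint J₁ J₂ := disjoint_left.mpr fun u h₁ h₂ => by linarith [h₁.1.2, h₂.1.1]
  have hsub : J₁ ∪ J₂ ⊆ {u | quantileSplice ρ ν ε δ u ≤ x} ∩ Ioo 0 1 := by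
    rintro u (⟨⟨hu₀, hu⟩, hq⟩ | ⟨⟨hu, hu₁⟩, hq⟩)
    · rw [zero_add] at hu
      replace hq : quantile ρ u ≤ x + ε := by simpa using hq
      refine ⟨?_, hu₀, by linarith⟩
      change quantileSplice ρ ν ε δ u ≤ x
      rw [quantileSplice, if_pos hu]
      linarith
    · rw [sub_add_cancel] at hu₁
      refine ⟨?_, by linarith, hu₁⟩
      change quantileSplice ρ ν ε δ u ≤ x
      rwa [quantileSplice, if_neg (not_lt.mpr hu.le)]
  calc ν (Iic x) = ENNReal.ofReal (cdf ν x) := (ofReal_cdf ν x).symm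
    _ ≤ ENNReal.ofReal (min (cdf ρ (x + ε)) (1 - δ) + min (cdf ν x) δ) := by
        refine ENNReal.ofReal_le_ofReal ?_
        rcases le_total (cdf ν x) δ with h | h
        · rw [min_eq_left h]
          linarith [le_min (cdf_nonneg ρ (x + ε)) (sub_nonneg.2 hδ₁)]
        · rw [min_eq_right h]
          linarith [le_min (by linarith [hνρ x] : cdf ν x - δ ≤ cdf ρ (x + ε))
            (by linarith [cdf_le_one ν x] : cdf ν x - δ ≤ 1 - δ)]
    _ = volume J₁ + volume J₂ := by
        rw [volume_Ioo_inter_quantile_sub_le ρ (by linarith),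
          volume_Ioo_inter_quantile_sub_le ν hδ₁,
          ENNReal.ofReal_add (le_min (cdf_nonneg _ _) (by linarith)) (le_min (cdf_nonneg _ _) hδ₀)]
    _ = volume (J₁ ∪ J₂) := (measure_union hdisj hJ₂).symm
    _ ≤ _ := by
        rw [Measure.restrict_apply' measurableSet_Ioo]
        exact measure_mono hsub

end quantileSplice

lemma cdf_map_add_le {Ω Ω' : Type*} [MeasurableSpace Ω] [MeasurableSpace Ω']
    {μ : Measure Ω} [IsProbabilityMeasure μ] {μ' : Measure Ω'} [IsProbabilityMeasure μ']
    {X Z : Ω → ℝ} {Y : Ω' → ℝ} (hX : Measurable X) (hZ : Measurable Z) (hY : Measurable Y)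
    (hst : ∀ x, μ {ω | X ω ≤ x} ≤ μ' {ω | Y ω ≤ x}) (ε x : ℝ) :
    cdf (μ.map (X + Z)) x ≤ cdf (μ'.map Y) (x + ε) + μ.real {ω | ε ≤ |Z ω|} := by
  have := Measure.isProbabilityMeasure_map (μ := μ) (hX.add hZ).aemeasurable
  have := Measure.isProbabilityMeasure_map (μ := μ') hY.aemeasurable
  rw [cdf_eq_real, cdf_eq_real, map_measureReal_apply (hX.add hZ) measurableSet_Iic,
    map_measureReal_apply hY measurableSet_Iic]
  have hsub : (X + Z) ⁻¹' Iic x ⊆ {ω | X ω ≤ x + ε} ∪ {ω | ε ≤ |Z ω|} :=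
    fun ω (hω : X ω + Z ω ≤ x) => (le_or_gt ε |Z ω|).elim Or.inr fun h =>
      Or.inl (show X ω ≤ x + ε by linarith [neg_le_abs (Z ω)])
  calc μ.real ((X + Z) ⁻¹' Iic x) ≤ μ.real {ω | X ω ≤ x + ε} + μ.real {ω | ε ≤ |Z ω|} :=
        (measureReal_mono hsub).trans (measureReal_union_le _ _)
    _ ≤ _ := by
        gcongr
        exact ENNReal.toReal_mono (measure_ne_top _ _) (hst (x + ε))

theorem stochastic_order_add_oP_corollary_general
    {Ω Ω' : Type*} [MeasurableSpace Ω] [MeasurableSpace Ω']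
    (μ : Measure Ω) [IsProbabilityMeasure μ]
    (μ' : Measure Ω') [IsProbabilityMeasure μ']
    (X Z : ℕ → Ω → ℝ) (Y : ℕ → Ω' → ℝ)
    (hX : ∀ n, Measurable (X n)) (hZ : ∀ n, Measurable (Z n))
    (hY : ∀ n, Measurable (Y n))
    (hst : ∀ n (x : ℝ), μ {ω | X n ω ≤ x} ≤ μ' {ω | Y n ω ≤ x})
    (hZ0 : TendstoInMeasure μ Z atTop (fun _ => (0 : ℝ))) :
    ∃ (Ω'' : Type) (_ : MeasurableSpace Ω'') (μ'' : Measure Ω'')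
      (_ : IsProbabilityMeasure μ'') (Y' R : ℕ → Ω'' → ℝ),
      (∀ n, Measurable (Y' n)) ∧ (∀ n, Measurable (R n)) ∧
      (∀ n, Measure.map (Y' n) μ'' = Measure.map (Y n) μ') ∧
      TendstoInMeasure μ'' R atTop (fun _ => (0 : ℝ)) ∧
      ∀ n (x : ℝ), μ {ω | X n ω + Z n ω ≤ x} ≤ μ'' {ω | Y' n ω + R n ω ≤ x} := by
  obtain ⟨ε, hε_pos, hε, hμε⟩ := hZ0.exists_tendsto_measure_le_dist
  simp only [Real.dist_0_eq_abs] at hμε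
  set δ : ℕ → ℝ := fun n => μ.real {ω | ε n ≤ |Z n ω|}
  have hδ : Tendsto δ atTop (𝓝 0) := (ENNReal.tendsto_toReal ENNReal.zero_ne_top).comp hμε
  set ρ : ℕ → Measure ℝ := fun n => μ'.map (Y n)
  set ν : ℕ → Measure ℝ := fun n => μ.map (X n + Z n)
  have (n : ℕ) : IsProbabilityMeasure (ρ n) := Measure.isProbabilityMeasure_map (hY n).aemeasurable
  have (n : ℕ) : IsProbabilityMeasure (ν n) :=
    Measure.isProbabilityMeasure_map ((hX n).add (hZ n)).aemeasurable
  refine ⟨ℝ, inferInstance, volume.restrict (Ioo 0 1), inferInstance, fun n => quantile (ρ n),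
    fun n => quantileSplice (ρ n) (ν n) (ε n) (δ n) - quantile (ρ n),
    fun n => measurable_quantile _, fun n => (measurable_quantileSplice _ _).sub
    (measurable_quantile _), fun n => map_quantile_volume_restrict_Ioo _, ?_, fun n x => ?_⟩
  · refine tendstoInMeasure_iff_dist.2 fun a ha => tendsto_of_tendsto_of_tendsto_of_le_of_le'
      tendsto_const_nhds (by simpa using ENNReal.tendsto_ofReal hδ) (.of_forall fun n => zero_le) ?_
    filter_upwards [hε.eventually_lt_const ha] with n hn
    exact measure_le_dist_quantileSplice_sub_quantile_le _ _ (by rwa [abs_of_pos (hε_pos n)])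
  · calc μ {ω | X n ω + Z n ω ≤ x} = ν n (Iic x) :=
          (Measure.map_apply ((hX n).add (hZ n)) measurableSet_Iic).symm
      _ ≤ _ := measure_Iic_le_measure_quantileSplice_le _ _ measureReal_nonneg measureReal_le_one
          (fun x => cdf_map_add_le (hX n) (hZ n) (hY n) (hst n) (ε n) x) x
      _ = _ := by simp only [Pi.sub_apply, add_sub_cancel]; rfl

theorem stochastic_order_add_oP_corollary
    {Ω Ω' : Type*} [MeasurableSpace Ω] [MeasurableSpace Ω']
    (μ : Measure Ω) [IsProbabilityMeasure μ]
    (μ' : Measure Ω') [IsProbabilityMeasure μ']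
    (X Z : ℕ → Ω → ℝ) (Y : ℕ → Ω' → ℝ)
    (hX : ∀ n, Measurable (X n)) (hZ : ∀ n, Measurable (Z n))
    (hY : ∀ n, Measurable (Y n))
    (hcont : ∀ n (x : ℝ), μ (X n ⁻¹' {x}) = 0)
    (hst : ∀ n (x : ℝ), μ {ω | X n ω ≤ x} ≤ μ' {ω | Y n ω ≤ x})
    (hZ0 : TendstoInMeasure μ Z atTop (fun _ => (0 : ℝ))) :
    ∃ (Ω'' : Type) (_ : MeasurableSpace Ω'') (μ'' : Measure Ω'')
      (_ : IsProbabilityMeasure μ'') (Y' R : ℕ → Ω'' → ℝ),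
      (∀ n, Measurable (Y' n)) ∧ (∀ n, Measurable (R n)) ∧
      (∀ n, Measure.map (Y' n) μ'' = Measure.map (Y n) μ') ∧
      TendstoInMeasure μ'' R atTop (fun _ => (0 : ℝ)) ∧
      ∀ n (x : ℝ), μ {ω | X n ω + Z n ω ≤ x} ≤ μ'' {ω | Y' n ω + R n ω ≤ x} :=
  stochastic_order_add_oP_corollary_general μ μ' X Z Y hX hZ hY hst hZ0
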